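/- If the truncated singular values Σ_L are all strictly positive, then the matrices Cᴹ = Jᴹ U_L and Cᴶ = Jᶜ V_L each have full column rank L. -/
import Mathlib


open Matrix

private lemma subMulAux {m n o l : Type*} [Fintype n] (M : Matrix m n ℂ)
    (N : Matrix n o ℂ) (f : l → m) :
    (M.submatrix f id) * N = (M * N).submatrix f id := by
  ext i j; simp [Matrix.mul_apply]

private lemma mulSubAux {m n o l : Type*} [Fintype n] (M : Matrix m n ℂ)
    (N : Matrix n o ℂ) (g : l → o) :
    M * (N.submatrix id g) = (M * N).submatrix id g := by
  ext i j; simp [Matrix.mul_apply]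

/-- If the retained singular values are all strictly positive, then the CBF
matrices `Cᴹ = Jᴹ U_L` and `Cᴶ = Jᶜ V_L` each have full column rank `L`. -/
theorem cbf_full_column_rank {N s L : ℕ} (hL : L ≤ s)
    (G : Matrix (Fin N) (Fin N) ℂ) (JM JJ : Matrix (Fin N) (Fin s) ℂ)
    (A U V : Matrix (Fin s) (Fin s) ℂ) (σ : Fin s → ℝ)
    (hAdef : A = JMᴴ * G * JJ)
    (hU : U ∈ Matrix.unitaryGroup (Fin s) ℂ)
    (hV : V ∈ Matrix.unitaryGroup (Fin s) ℂ)
    (hσ0 : ∀ i, 0 ≤ σ i)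
    (hσdesc : ∀ i j : Fin s, i ≤ j → σ j ≤ σ i)
    (hA : A = U * Matrix.diagonal (fun i => (σ i : ℂ)) * Vᴴ)
    (UL VL : Matrix (Fin s) (Fin L) ℂ)
    (hUL : UL = U.submatrix id (Fin.castLE hL))
    (hVL : VL = V.submatrix id (Fin.castLE hL))
    (CM CJ : Matrix (Fin N) (Fin L) ℂ)
    (hCM : CM = JM * UL) (hCJ : CJ = JJ * VL)
    (hpos : ∀ i : Fin L, 0 < σ (Fin.castLE hL i)) :
    CM.rank = L ∧ CJ.rank = L := by
  have hUU : Uᴴ * U = 1 := by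
    have := hU.1
    rwa [Matrix.star_eq_conjTranspose] at this
  have hVV : Vᴴ * V = 1 := by
    have := hV.1
    rwa [Matrix.star_eq_conjTranspose] at this
  set c := Fin.castLE hL with hc
  set D : Matrix (Fin L) (Fin L) ℂ := Matrix.diagonal (fun i => (σ (c i) : ℂ)) with hD
  -- key identity : CMᴴ * G * CJ = D
  have key : CMᴴ * G * CJ = D := by
    have hULH : ULᴴ = Uᴴ.submatrix c id := by
      rw [hUL, Matrix.conjTranspose_submatrix]
    have e1 : CMᴴ * G * CJ = ULᴴ * A * VL := by
      rw [hCM, hCJ, hAdef, Matrix.conjTranspose_mul]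
      simp only [Matrix.mul_assoc]
    rw [e1, hULH, hVL, subMulAux, mulSubAux, subMulAux, Matrix.submatrix_submatrix]
    have e2 : Uᴴ * A * V = Matrix.diagonal (fun i => (σ i : ℂ)) := by
      rw [hA]
      calc Uᴴ * (U * Matrix.diagonal (fun i => (σ i : ℂ)) * Vᴴ) * V
          = (Uᴴ * U) * Matrix.diagonal (fun i => (σ i : ℂ)) * (Vᴴ * V) := by
            simp only [Matrix.mul_assoc]
        _ = Matrix.diagonal (fun i => (σ i : ℂ)) := by rw [hUU, hVV]; simp
    rw [show Uᴴ * A * V = Uᴴ * (A * V) from by rw [Matrix.mul_assoc]] at e2 ⊢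
    rw [e2]
    simp only [Function.comp_id, Function.id_comp]
    rw [Matrix.submatrix_diagonal _ _ (Fin.castLE_injective hL)]
    rfl
  have hDunit : IsUnit D := by
    rw [Matrix.isUnit_iff_isUnit_det, hD, Matrix.det_diagonal, isUnit_iff_ne_zero]
    exact Finset.prod_ne_zero_iff.2 fun i _ =>
      Complex.ofReal_ne_zero.mpr (hpos i).ne'
  have hDrank : D.rank = L := by
    rw [Matrix.rank_of_isUnit D hDunit, Fintype.card_fin]
  constructor
  · refine le_antisymm (by simpa using CM.rank_le_card_width) ?_
    calc (L : ℕ) = D.rank := hDrank.symm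
      _ = (CJᴴ * Gᴴ * CM).rank := by
            have hDD : Dᴴ = D := by
              rw [hD, Matrix.diagonal_conjTranspose]
              ext i j
              simp [Matrix.diagonal_apply, Complex.conj_ofReal]
            rw [show CJᴴ * Gᴴ * CM = (CMᴴ * G * CJ)ᴴ from by
                  simp [Matrix.conjTranspose_mul, Matrix.mul_assoc], key, hDD]
      _ ≤ CM.rank := Matrix.rank_mul_le_right _ _
  · refine le_antisymm (by simpa using CJ.rank_le_card_width) ?_
    calc (L : ℕ) = D.rank := hDrank.symm
      _ ≤ CJ.rank := key ▸ Matrix.rank_mul_le_right _ _
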